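/- Assume every i ∈ {1,…,N} has at least one successor. For every κ with 1 < κ < 1/θ there exists a constant C₀ > 0 such that for all μ ∈ [0,1/2), all m > 0 and all ℏ ∈ (0,1], the function A_{m,μ}(x,ξ) := ℏ^{mμ} (ℏ^{2μ} + δ̃(x,ξ)²)^{−m/2} — where δ̃ is the mollification at scale ℏ^μ of the distance function δ — satisfies the decay condition: for every pair i⇝j and every (x,ξ) ∈ I_i × ℝ with δ(x,ξ) > C₀·ℏ^μ, one has A_{m,μ}(F_{i,j}(x,ξ)) ≤ κ^{−m} · A_{m,μ}(x,ξ). -/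

import Mathlib

open MeasureTheory

/-- Composition `φ_{w_{0,k}} := φ_{w_{k−1},w_k} ∘ ⋯ ∘ φ_{w_0,w_1}` along a right-infinite word. -/
def rightComp {N : ℕ} (φ : Fin N → Fin N → ℝ → ℝ) (w : ℕ → Fin N) : ℕ → ℝ → ℝ
  | 0 => id
  | k + 1 => φ (w k) (w (k + 1)) ∘ rightComp φ w k

/-- `ζ_w(x) := −Σ_{k≥1} φ'_{w_{0,k}}(x) · τ'(φ_{w_{0,k}}(x))`. -/
noncomputable def zetaFn {N : ℕ} (φ : Fin N → Fin N → ℝ → ℝ) (τ : ℝ → ℝ)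
    (w : ℕ → Fin N) (x : ℝ) : ℝ :=
  -∑' k : ℕ, deriv (rightComp φ w (k + 1)) x * deriv τ (rightComp φ w (k + 1) x)


lemma moll_int (χ : ℝ × ℝ → ℝ) (hχ : Continuous χ)
    (hχsupp : tsupport χ ⊆ Metric.closedBall 0 1) (g : ℝ × ℝ → ℝ) (hg : Continuous g)
    (h : ℝ) (hh : 0 < h) (z : ℝ × ℝ) :
    Integrable (fun z' => g z' * χ (h⁻¹ • (z - z'))) := by
  have hcont : Continuous (fun z' : ℝ × ℝ => g z' * χ (h⁻¹ • (z - z'))) := by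
    exact hg.mul (hχ.comp (by fun_prop))
  apply hcont.integrable_of_hasCompactSupport
  apply HasCompactSupport.intro (isCompact_closedBall z h)
  intro z' hz'
  by_contra hne
  have h1 : χ (h⁻¹ • (z - z')) ≠ 0 := fun h0 => hne (by simp [h0])
  have h2 : h⁻¹ • (z - z') ∈ Metric.closedBall (0 : ℝ × ℝ) 1 :=
    hχsupp (subset_tsupport _ h1)
  simp only [Metric.mem_closedBall, dist_zero_right, norm_smul, norm_inv,
    Real.norm_eq_abs, abs_of_pos hh] at h2
  apply hz'
  simp only [Metric.mem_closedBall, dist_eq_norm]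
  have := (inv_mul_le_iff₀ hh).mp h2
  calc ‖z' - z‖ = ‖z - z'‖ := norm_sub_rev _ _
  _ ≤ h := by linarith [this]

lemma moll_total (χ : ℝ × ℝ → ℝ) (h : ℝ) (hh : 0 < h) (z : ℝ × ℝ) :
    ∫ z', χ (h⁻¹ • (z - z')) = h ^ 2 * ∫ u, χ u := by
  rw [integral_sub_left_eq_self (fun z' => χ (h⁻¹ • z')) volume z,
    Measure.integral_comp_inv_smul volume χ h]
  rw [Module.finrank_prod, Module.finrank_self]
  simp [abs_of_pos hh, smul_eq_mul]

lemma moll_close (δ : ℝ × ℝ → ℝ) (L : NNReal) (hLip : LipschitzWith L δ)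
    (χ : ℝ × ℝ → ℝ) (hχ : Continuous χ) (hχ0 : ∀ u, 0 ≤ χ u)
    (hχsupp : tsupport χ ⊆ Metric.closedBall 0 1) (hc : 0 < ∫ u, χ u)
    (h : ℝ) (hh : 0 < h) (z : ℝ × ℝ) :
    |(∫ z', δ z' * ((h ^ 2)⁻¹ * (∫ u, χ u)⁻¹ * χ (h⁻¹ • (z - z')))) - δ z| ≤ L * h := by
  set c := ∫ u, χ u with hcdef
  set k : ℝ × ℝ → ℝ := fun z' => (h ^ 2)⁻¹ * c⁻¹ * χ (h⁻¹ • (z - z')) with hk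
  have hknn : ∀ z', 0 ≤ k z' := fun z' => by
    have := hχ0 (h⁻¹ • (z - z')); positivity
  have hχint : Integrable (fun z' => χ (h⁻¹ • (z - z'))) := by
    have := moll_int χ hχ hχsupp (fun _ => 1) continuous_const h hh z
    simpa using this
  have hkint : Integrable k := hχint.const_mul _
  have hk1 : ∫ z', k z' = 1 := by
    rw [hk, integral_const_mul, moll_total χ h hh z, ← hcdef]
    field_simp
  have hδkint : Integrable (fun z' => δ z' * k z') := by
    have h1 := (moll_int χ hχ hχsupp δ hLip.continuous h hh z).const_mul ((h ^ 2)⁻¹ * c⁻¹)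
    exact h1.congr (Filter.Eventually.of_forall fun z' => by simp [hk]; ring)
  have hsupp : ∀ z', k z' ≠ 0 → ‖z - z'‖ ≤ h := by
    intro z' hkne
    have h1 : χ (h⁻¹ • (z - z')) ≠ 0 := fun h0 => hkne (by simp [hk, h0])
    have h2 : h⁻¹ • (z - z') ∈ Metric.closedBall (0 : ℝ × ℝ) 1 :=
      hχsupp (subset_tsupport _ h1)
    simp only [Metric.mem_closedBall, dist_zero_right, norm_smul, norm_inv,
      Real.norm_eq_abs, abs_of_pos hh] at h2
    have := (inv_mul_le_iff₀ hh).mp h2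
    linarith
  have key : ∫ z', (δ z' - δ z) * k z' = (∫ z', δ z' * k z') - δ z := by
    simp_rw [sub_mul]
    rw [integral_sub hδkint (hkint.const_mul (δ z)), integral_const_mul, hk1, mul_one]
  have bound : ‖∫ z', (δ z' - δ z) * k z'‖ ≤ ∫ z', (L * h) * k z' := by
    refine norm_integral_le_of_norm_le (hkint.const_mul _)
      (Filter.Eventually.of_forall fun z' => ?_)
    rcases eq_or_ne (k z') 0 with h0 | h0
    · simp [h0]
    · have hd : |δ z' - δ z| ≤ L * h := by
        have h1 := hLip.dist_le_mul z' z
        have h2 : dist z' z ≤ h := by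
          rw [dist_eq_norm, ← norm_sub_rev]; exact hsupp z' h0
        rw [Real.dist_eq] at h1
        calc |δ z' - δ z| ≤ L * dist z' z := h1
          _ ≤ L * h := by gcongr
      rw [norm_mul, Real.norm_eq_abs, Real.norm_eq_abs, abs_of_nonneg (hknn z')]
      exact mul_le_mul_of_nonneg_right hd (hknn z')
  have : |(∫ z', δ z' * k z') - δ z| ≤ L * h := by
    rw [← key]
    calc |∫ z', (δ z' - δ z) * k z'| ≤ ∫ z', (L * h) * k z' := bound
      _ = L * h := by rw [integral_const_mul, hk1, mul_one]
  exact this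

section dyn
variable {N : ℕ} {Iv : Fin N → Set ℝ} {Adj : Fin N → Fin N → Prop}
  {φ : Fin N → Fin N → ℝ → ℝ} {θ : ℝ}

lemma rc_diff (hφsm : ∀ i j, Adj i j → ContDiff ℝ (⊤ : ℕ∞) (φ i j))
    (w : ℕ → Fin N) (hw : ∀ l, Adj (w l) (w (l + 1))) (k : ℕ) :
    Differentiable ℝ (rightComp φ w k) := by
  induction k with
  | zero => exact differentiable_id
  | succ k ih => exact ((hφsm _ _ (hw k)).differentiable (by simp)).comp ih

lemma rc_mem_deriv (hφsm : ∀ i j, Adj i j → ContDiff ℝ (⊤ : ℕ∞) (φ i j))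
    (hmaps : ∀ i j, Adj i j → φ i j '' Iv i ⊆ interior (Iv j))
    (hθ0 : 0 ≤ θ)
    (hcontr : ∀ i j, Adj i j → ∀ x ∈ Iv i, |deriv (φ i j) x| ≤ θ)
    (w : ℕ → Fin N) (hw : ∀ l, Adj (w l) (w (l + 1)))
    (t : ℝ) (ht : t ∈ Iv (w 0)) (k : ℕ) :
    rightComp φ w k t ∈ Iv (w k) ∧ |deriv (rightComp φ w k) t| ≤ θ ^ k := by
  induction k with
  | zero => simpa [rightComp] using ht
  | succ k ih =>
    constructor
    · exact interior_subset (hmaps _ _ (hw k) ⟨_, ih.1, rfl⟩)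
    · have hd : deriv (rightComp φ w (k + 1)) t
          = deriv (φ (w k) (w (k + 1))) (rightComp φ w k t) * deriv (rightComp φ w k) t := by
        exact deriv_comp t ((hφsm _ _ (hw k)).differentiable (by simp) _)
          (rc_diff hφsm w hw k t)
      rw [hd, abs_mul, pow_succ']
      exact mul_le_mul (hcontr _ _ (hw k) _ ih.1) ih.2 (abs_nonneg _)
        (le_trans (abs_nonneg _) (hcontr _ _ (hw k) _ ih.1))

lemma rc_summable (hφsm : ∀ i j, Adj i j → ContDiff ℝ (⊤ : ℕ∞) (φ i j))
    (hmaps : ∀ i j, Adj i j → φ i j '' Iv i ⊆ interior (Iv j))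
    (hθ0 : 0 ≤ θ) (hθ1 : θ < 1)
    (hcontr : ∀ i j, Adj i j → ∀ x ∈ Iv i, |deriv (φ i j) x| ≤ θ)
    (τ : ℝ → ℝ) (M : ℝ) (hM : ∀ i : Fin N, ∀ t ∈ Iv i, |deriv τ t| ≤ M)
    (w : ℕ → Fin N) (hw : ∀ l, Adj (w l) (w (l + 1)))
    (t : ℝ) (ht : t ∈ Iv (w 0)) :
    Summable (fun k => deriv (rightComp φ w k) t * deriv τ (rightComp φ w k t)) := by
  have hM0 : 0 ≤ M := le_trans (abs_nonneg _) (hM _ _ ht)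
  refine Summable.of_norm_bounded (g := fun k => M * θ ^ k)
    ((summable_geometric_of_lt_one hθ0 hθ1).mul_left M) (fun k => ?_)
  obtain ⟨hmem, hder⟩ := rc_mem_deriv hφsm hmaps hθ0 hcontr w hw t ht k
  rw [Real.norm_eq_abs, abs_mul]
  exact le_trans (mul_le_mul hder (hM _ _ hmem) (abs_nonneg _) (by positivity))
    (le_of_eq (mul_comm _ _))

/-- Extension of a word by one letter on the left. -/
def wext {N : ℕ} (i : Fin N) (w : ℕ → Fin N) : ℕ → Fin N :=
  fun n => Nat.casesOn n i w

lemma wext_adj (i : Fin N) (w : ℕ → Fin N) (hw : ∀ l, Adj (w l) (w (l + 1)))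
    (hi : Adj i (w 0)) : ∀ l, Adj (wext i w l) (wext i w (l + 1)) := by
  intro l; cases l with
  | zero => exact hi
  | succ l => exact hw l

lemma rc_wext (i : Fin N) (w : ℕ → Fin N) (k : ℕ) :
    rightComp φ (wext i w) (k + 1) = rightComp φ w k ∘ φ i (w 0) := by
  induction k with
  | zero => rfl
  | succ k ih =>
    show φ (w k) (w (k + 1)) ∘ rightComp φ (wext i w) (k + 1) = _
    rw [ih]; rfl

lemma zeta_shift (hφsm : ∀ i j, Adj i j → ContDiff ℝ (⊤ : ℕ∞) (φ i j))
    (hmaps : ∀ i j, Adj i j → φ i j '' Iv i ⊆ interior (Iv j))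
    (hθ0 : 0 ≤ θ) (hθ1 : θ < 1)
    (hcontr : ∀ i j, Adj i j → ∀ x ∈ Iv i, |deriv (φ i j) x| ≤ θ)
    (τ : ℝ → ℝ) (M : ℝ) (hM : ∀ i : Fin N, ∀ t ∈ Iv i, |deriv τ t| ≤ M)
    (w : ℕ → Fin N) (hw : ∀ l, Adj (w l) (w (l + 1)))
    (i : Fin N) (hi : Adj i (w 0)) (x : ℝ) (hx : x ∈ Iv i) :
    zetaFn φ τ (wext i w) x
      = deriv (φ i (w 0)) x * (zetaFn φ τ w (φ i (w 0) x) - deriv τ (φ i (w 0) x)) := by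
  set y := φ i (w 0) x with hy
  have hymem : y ∈ Iv (w 0) := interior_subset (hmaps _ _ hi ⟨x, hx, rfl⟩)
  set g : ℕ → ℝ := fun k => deriv (rightComp φ w k) y * deriv τ (rightComp φ w k y) with hg
  have hgsum : Summable g := rc_summable hφsm hmaps hθ0 hθ1 hcontr τ M hM w hw y hymem
  have hterm : ∀ k : ℕ,
      deriv (rightComp φ (wext i w) (k + 1)) x
        * deriv τ (rightComp φ (wext i w) (k + 1) x)
      = deriv (φ i (w 0)) x * g k := by
    intro k
    have h1 : deriv (rightComp φ (wext i w) (k + 1)) x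
        = deriv (rightComp φ w k) y * deriv (φ i (w 0)) x := by
      rw [rc_wext i w k]
      exact deriv_comp x (rc_diff hφsm w hw k y)
        ((hφsm _ _ hi).differentiable (by simp) x)
    have h2 : rightComp φ (wext i w) (k + 1) x = rightComp φ w k y := by
      rw [rc_wext i w k]; rfl
    rw [h1, h2, hg]; ring
  have hg0 : g 0 = deriv τ y := by simp [hg, rightComp]
  calc zetaFn φ τ (wext i w) x
      = -∑' k : ℕ, deriv (φ i (w 0)) x * g k := by
        unfold zetaFn; rw [tsum_congr hterm]
    _ = -(deriv (φ i (w 0)) x * ∑' k, g k) := by rw [tsum_mul_left]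
    _ = -(deriv (φ i (w 0)) x * (g 0 + ∑' k, g (k + 1))) := by
        rw [Summable.tsum_eq_zero_add hgsum]
    _ = deriv (φ i (w 0)) x * (zetaFn φ τ w y - deriv τ y) := by
        unfold zetaFn; rw [hg0]; ring

end dyn

set_option maxHeartbeats 1000000 in
lemma escape_numeric (θ κ κ' L C₀ h d dF E E' m : ℝ)
    (hθ0 : 0 < θ) (hκ1 : 1 < κ) (hκκ' : κ < κ') (hκ'θ : κ' < 1 / θ)
    (hL0 : 0 ≤ L) (hh0 : 0 < h)
    (hC1 : 1 ≤ C₀) (hCA : (κ' + 1) * (L + 1) / (1 / θ - κ') ≤ C₀)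
    (hCB : (κ ^ 2 - 1) / (κ' ^ 2 - κ ^ 2) ≤ C₀ ^ 2)
    (hd : C₀ * h < d) (hkey : d ≤ θ * dF)
    (hE : |E - d| ≤ L * h) (hE' : |E' - dF| ≤ L * h)
    (hm : 0 < m) :
    (h ^ 2 + E' ^ 2) ^ (-(m / 2)) ≤ κ ^ (-m) * (h ^ 2 + E ^ 2) ^ (-(m / 2)) := by
  have hgap : 0 < 1 / θ - κ' := by linarith
  have h0κ : 0 < κ := by linarith
  have h1κ' : 1 < κ' := by linarith
  have hgap2 : 0 < κ' ^ 2 - κ ^ 2 := by nlinarith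
  have hd0 : 0 < d := lt_of_le_of_lt (by positivity) hd
  have hAh : (κ' + 1) * (L + 1) ≤ C₀ * (1 / θ - κ') := (div_le_iff₀ hgap).mp hCA
  have f1 : C₀ * h * (1 / θ - κ') ≤ d * (1 / θ - κ') :=
    mul_le_mul_of_nonneg_right hd.le hgap.le
  have f2 : (κ' + 1) * (L + 1) * h ≤ C₀ * (1 / θ - κ') * h :=
    mul_le_mul_of_nonneg_right hAh hh0.le
  have hstep1 : κ' * (d + L * h) + L * h ≤ d * (1 / θ) := by nlinarith
  have hdF : d * (1 / θ) ≤ dF := by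
    rw [mul_one_div]
    exact (div_le_iff₀ hθ0).mpr (by linarith)
  obtain ⟨hE'1, hE'2⟩ := abs_le.mp hE'
  obtain ⟨hE1, hE2⟩ := abs_le.mp hE
  have hE'lb : κ' * (d + L * h) ≤ E' := by linarith
  have hE'nn : 0 ≤ κ' * (d + L * h) := by positivity
  have hEsq : E ^ 2 ≤ (d + L * h) ^ 2 := sq_le_sq' (by linarith) (by linarith)
  have hE'sq : (κ' * (d + L * h)) ^ 2 ≤ E' ^ 2 := pow_le_pow_left₀ hE'nn hE'lb 2
  have hCB2 : κ ^ 2 - 1 ≤ (κ' ^ 2 - κ ^ 2) * C₀ ^ 2 := by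
    have := (div_le_iff₀ hgap2).mp hCB; linarith
  have hC0 : 0 < C₀ := by linarith
  have hdC : C₀ ^ 2 * h ^ 2 ≤ d ^ 2 := by
    nlinarith [mul_pos (sub_pos.mpr hd) (show 0 < d + C₀ * h by positivity)]
  have t1 : κ ^ 2 * E ^ 2 ≤ κ ^ 2 * (d + L * h) ^ 2 :=
    mul_le_mul_of_nonneg_left hEsq (by positivity)
  have t2 : (κ' ^ 2 - κ ^ 2) * d ^ 2 ≤ (κ' ^ 2 - κ ^ 2) * (d + L * h) ^ 2 :=
    mul_le_mul_of_nonneg_left (by nlinarith [mul_nonneg hL0 hh0.le]) hgap2.le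
  have t3 : (κ' ^ 2 - κ ^ 2) * (C₀ ^ 2 * h ^ 2) ≤ (κ' ^ 2 - κ ^ 2) * d ^ 2 :=
    mul_le_mul_of_nonneg_left hdC hgap2.le
  have t4 : (κ ^ 2 - 1) * h ^ 2 ≤ (κ' ^ 2 - κ ^ 2) * (C₀ ^ 2 * h ^ 2) := by
    have h' := mul_le_mul_of_nonneg_right hCB2 (sq_nonneg h)
    nlinarith [h']
  have t5 : κ' ^ 2 * (d + L * h) ^ 2 ≤ E' ^ 2 := by nlinarith [hE'sq]
  have key : κ ^ 2 * (h ^ 2 + E ^ 2) ≤ h ^ 2 + E' ^ 2 := by nlinarith [t1, t2, t3, t4, t5]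
  have hQ : (0 : ℝ) < h ^ 2 + E ^ 2 := by positivity
  have h1 : (h ^ 2 + E' ^ 2) ^ (-(m / 2)) ≤ (κ ^ 2 * (h ^ 2 + E ^ 2)) ^ (-(m / 2)) :=
    Real.rpow_le_rpow_of_nonpos (by positivity) key (by linarith)
  have h2 : (κ ^ 2 * (h ^ 2 + E ^ 2)) ^ (-(m / 2))
      = κ ^ (-m) * (h ^ 2 + E ^ 2) ^ (-(m / 2)) := by
    rw [Real.mul_rpow (by positivity) hQ.le,
      ← Real.rpow_natCast_mul h0κ.le 2 (-(m / 2)),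
      show ((2 : ℕ) : ℝ) * (-(m / 2)) = -m by push_cast; ring]
  rw [h2] at h1
  exact h1

/-- decay of the refined escape function
`A_{m,μ}(x,ξ) = ℏ^{mμ}(ℏ^{2μ} + δ̃(x,ξ)²)^{−m/2}` (with `δ̃` the mollification of the
distance function `δ` at scale `ℏ^μ`) along the canonical map `F_{i,j}`: for every
`1 < κ < 1/θ` there is `C₀ > 0` such that for all `μ ∈ [0,1/2)`, `m > 0`, `ℏ ∈ (0,1]`,
whenever `δ(x,ξ) > C₀ ℏ^μ` one has `A_{m,μ}(F_{i,j}(x,ξ)) ≤ κ^{−m} A_{m,μ}(x,ξ)`. -/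
theorem refined_escape_function_decay
    (N : ℕ) (hN : 1 ≤ N)
    (Iv : Fin N → Set ℝ) (aa bb : Fin N → ℝ)
    (hIcc : ∀ i, Iv i = Set.Icc (aa i) (bb i)) (hab : ∀ i, aa i ≤ bb i)
    (hdisj : ∀ i j, i ≠ j → Disjoint (Iv i) (Iv j))
    (Adj : Fin N → Fin N → Prop)
    (φ : Fin N → Fin N → ℝ → ℝ)
    (hφsm : ∀ i j, Adj i j → ContDiff ℝ (⊤ : ℕ∞) (φ i j))
    (hφinj : ∀ i j, Adj i j → Set.InjOn (φ i j) (Iv i))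
    (hφd0 : ∀ i j, Adj i j → ∀ x ∈ Iv i, deriv (φ i j) x ≠ 0)
    (hmaps : ∀ i j, Adj i j → φ i j '' Iv i ⊆ interior (Iv j))
    (θ : ℝ) (hθ0 : 0 < θ) (hθ1 : θ < 1)
    (hcontr : ∀ i j, Adj i j → ∀ x ∈ Iv i, |deriv (φ i j) x| ≤ θ)
    (hsep : ∀ i j k l, Adj i j → Adj k l →
      (φ i j '' Iv i ∩ φ k l '' Iv k).Nonempty → i = k ∧ j = l)
    (τ : ℝ → ℝ) (hτ : ContDiff ℝ (⊤ : ℕ∞) τ)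
    (hsucc : ∀ i : Fin N, ∃ j : Fin N, Adj i j)
    -- the distance function `δ`, extended Lipschitz-continuously to the plane:
    (δ : ℝ × ℝ → ℝ) (Lδ : NNReal) (hδLip : LipschitzWith Lδ δ)
    (hδval : ∀ i : Fin N, ∀ x ∈ Iv i, ∀ ξ : ℝ,
      δ (x, ξ) = sInf {r : ℝ | ∃ w : ℕ → Fin N,
        (∀ l, Adj (w l) (w (l + 1))) ∧ w 0 = i ∧ r = |ξ - zetaFn φ τ w x|})
    -- the mollifier:
    (χ : ℝ × ℝ → ℝ) (hχ : ContDiff ℝ (⊤ : ℕ∞) χ) (hχ0 : ∀ z, 0 ≤ χ z)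
    (hχsupp : tsupport χ ⊆ Metric.closedBall 0 1) (hχne : χ ≠ 0) :
    ∀ κ : ℝ, 1 < κ → κ < 1 / θ →
    ∃ C₀ : ℝ, 0 < C₀ ∧ ∀ μ : ℝ, 0 ≤ μ → μ < 1 / 2 → ∀ m : ℝ, 0 < m →
      ∀ ℏ ∈ Set.Ioc (0 : ℝ) 1, ∀ i j, Adj i j → ∀ x ∈ Iv i, ∀ ξ : ℝ,
      C₀ * ℏ ^ μ < δ (x, ξ) →
      ℏ ^ (m * μ) * (ℏ ^ (2 * μ) +
          (∫ z' : ℝ × ℝ, δ z' * ((ℏ ^ (2 * μ))⁻¹ * (∫ u : ℝ × ℝ, χ u)⁻¹ *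
            χ ((ℏ ^ μ)⁻¹ •
              (((φ i j x, ξ / deriv (φ i j) x + deriv τ (φ i j x)) : ℝ × ℝ) - z')))) ^ 2)
        ^ (-(m / 2))
      ≤ κ ^ (-m) * (ℏ ^ (m * μ) * (ℏ ^ (2 * μ) +
          (∫ z' : ℝ × ℝ, δ z' * ((ℏ ^ (2 * μ))⁻¹ * (∫ u : ℝ × ℝ, χ u)⁻¹ *
            χ ((ℏ ^ μ)⁻¹ • (((x, ξ) : ℝ × ℝ) - z')))) ^ 2) ^ (-(m / 2))) := by
  intro κ hκ1 hκθ
  have hθinv : 1 < 1 / θ := lt_trans hκ1 hκθ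
  set κ' := (κ + 1 / θ) / 2 with hκ'def
  have hκκ' : κ < κ' := by rw [hκ'def]; linarith
  have hκ'θ : κ' < 1 / θ := by rw [hκ'def]; linarith
  have h1κ' : 1 < κ' := lt_trans hκ1 hκκ'
  have h0κ : 0 < κ := by linarith
  have hgap2 : 0 < κ' ^ 2 - κ ^ 2 := by nlinarith
  have hL0 : (0 : ℝ) ≤ (Lδ : ℝ) := Lδ.coe_nonneg
  set A := (κ' + 1) * ((Lδ : ℝ) + 1) / (1 / θ - κ') with hA
  set B := Real.sqrt ((κ ^ 2 - 1) / (κ' ^ 2 - κ ^ 2)) with hB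
  refine ⟨max 1 (max A B), lt_of_lt_of_le one_pos (le_max_left _ _), ?_⟩
  intro μ hμ0 _ m hm ℏ hℏ i j hij x hx ξ hdlt
  set C₀ := max 1 (max A B) with hC₀
  have hC1 : (1 : ℝ) ≤ C₀ := le_max_left _ _
  have hCA : A ≤ C₀ := le_trans (le_max_left A B) (le_max_right 1 _)
  have hCBle : B ≤ C₀ := le_trans (le_max_right A B) (le_max_right 1 _)
  have hratio : 0 ≤ (κ ^ 2 - 1) / (κ' ^ 2 - κ ^ 2) :=
    div_nonneg (by nlinarith) hgap2.le
  have hCB : (κ ^ 2 - 1) / (κ' ^ 2 - κ ^ 2) ≤ C₀ ^ 2 := by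
    calc (κ ^ 2 - 1) / (κ' ^ 2 - κ ^ 2) = B ^ 2 := (Real.sq_sqrt hratio).symm
      _ ≤ C₀ ^ 2 := pow_le_pow_left₀ (Real.sqrt_nonneg _) hCBle 2
  obtain ⟨hℏ0, hℏ1⟩ := hℏ
  set h := ℏ ^ μ with hhdef
  have hh0 : 0 < h := Real.rpow_pos_of_pos hℏ0 μ
  have h2eq : ℏ ^ (2 * μ) = h ^ 2 := by
    rw [hhdef, show (2 : ℝ) * μ = μ * 2 by ring, Real.rpow_mul hℏ0.le, Real.rpow_two]
  rw [h2eq]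
  -- a bound for `τ'` on the union of the intervals
  have hMex : ∃ M : ℝ, ∀ i : Fin N, ∀ t ∈ Iv i, |deriv τ t| ≤ M := by
    have hcpt : IsCompact (⋃ i, Iv i) :=
      isCompact_iUnion (fun i => by rw [hIcc i]; exact isCompact_Icc)
    obtain ⟨M, hM⟩ := hcpt.exists_bound_of_continuousOn
      ((hτ.continuous_deriv (by simp)).continuousOn)
    exact ⟨M, fun i t ht => by simpa using hM t (Set.mem_iUnion.2 ⟨i, ht⟩)⟩
  obtain ⟨M, hM⟩ := hMex
  -- existence of admissible infinite words
  have wordex : ∀ i₀ : Fin N, ∃ w : ℕ → Fin N, (∀ l, Adj (w l) (w (l + 1))) ∧ w 0 = i₀ := by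
    intro i₀
    choose nxt hnxt using hsucc
    exact ⟨fun n => Nat.rec i₀ (fun _ p => nxt p) n, fun l => hnxt _, rfl⟩
  have hSne : ∀ i₀ : Fin N, ∀ x₀ ξ₀ : ℝ, Set.Nonempty {r : ℝ | ∃ w : ℕ → Fin N,
      (∀ l, Adj (w l) (w (l + 1))) ∧ w 0 = i₀ ∧ r = |ξ₀ - zetaFn φ τ w x₀|} := by
    intro i₀ x₀ ξ₀
    obtain ⟨w, hw, hw0⟩ := wordex i₀
    exact ⟨_, w, hw, hw0, rfl⟩
  have hSbdd : ∀ i₀ : Fin N, ∀ x₀ ξ₀ : ℝ, BddBelow {r : ℝ | ∃ w : ℕ → Fin N,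
      (∀ l, Adj (w l) (w (l + 1))) ∧ w 0 = i₀ ∧ r = |ξ₀ - zetaFn φ τ w x₀|} := by
    intro i₀ x₀ ξ₀
    exact ⟨0, by rintro r ⟨w, hw, hw0, rfl⟩; positivity⟩
  set y := φ i j x with hy
  have hyIv : y ∈ Iv j := interior_subset (hmaps i j hij ⟨x, hx, rfl⟩)
  set η := ξ / deriv (φ i j) x + deriv τ y with hη
  -- the key dynamical estimate
  have hkey : δ (x, ξ) ≤ θ * δ (y, η) := by
    have hstep : δ (x, ξ) / θ ≤ δ (y, η) := by
      rw [hδval j y hyIv η]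
      refine le_csInf (hSne j y η) ?_
      rintro r ⟨w, hw, hw0, rfl⟩
      have hadj0 : Adj i (w 0) := by rw [hw0]; exact hij
      have hφeq : φ i (w 0) = φ i j := by rw [hw0]
      have hzs := zeta_shift hφsm hmaps hθ0.le hθ1 hcontr τ M hM w hw i hadj0 x hx
      rw [hφeq] at hzs
      have h1 : δ (x, ξ) ≤ |ξ - zetaFn φ τ (wext i w) x| := by
        rw [hδval i x hx ξ]
        exact csInf_le (hSbdd i x ξ) ⟨wext i w, wext_adj i w hw hadj0, rfl, rfl⟩
      have hdne := hφd0 i j hij x hx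
      have h2 : ξ - zetaFn φ τ (wext i w) x = deriv (φ i j) x * (η - zetaFn φ τ w y) := by
        rw [hzs, hη]
        field_simp
        ring
      have h3 : |ξ - zetaFn φ τ (wext i w) x| ≤ θ * |η - zetaFn φ τ w y| := by
        rw [h2, abs_mul]
        exact mul_le_mul_of_nonneg_right (hcontr i j hij x hx) (abs_nonneg _)
      rw [div_le_iff₀ hθ0]
      calc δ (x, ξ) ≤ θ * |η - zetaFn φ τ w y| := le_trans h1 h3
        _ = |η - zetaFn φ τ w y| * θ := mul_comm _ _
    calc δ (x, ξ) = θ * (δ (x, ξ) / θ) := by field_simp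
      _ ≤ θ * δ (y, η) := mul_le_mul_of_nonneg_left hstep hθ0.le
  -- the mollifier has positive integral
  have hχc : Continuous χ := hχ.continuous
  have hχcs : HasCompactSupport χ :=
    IsCompact.of_isClosed_subset (isCompact_closedBall 0 1) (isClosed_tsupport χ) hχsupp
  have hχint : Integrable χ := hχc.integrable_of_hasCompactSupport hχcs
  have hc : 0 < ∫ u : ℝ × ℝ, χ u := by
    rw [integral_pos_iff_support_of_nonneg (fun z => hχ0 z) hχint]
    obtain ⟨z₀, hz₀⟩ := Function.ne_iff.mp hχne
    have hsupp_eq : Function.support χ = χ ⁻¹' {0}ᶜ :=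
      Set.ext fun z => by simp [Function.mem_support]
    rw [hsupp_eq]
    exact (isOpen_compl_singleton.preimage hχc).measure_pos volume ⟨z₀, by simpa using hz₀⟩
  -- mollified distance is close to the distance
  have hE' := moll_close δ Lδ hδLip χ hχc hχ0 hχsupp hc h hh0 (y, η)
  have hE := moll_close δ Lδ hδLip χ hχc hχ0 hχsupp hc h hh0 (x, ξ)
  have hfin := escape_numeric θ κ κ' (Lδ : ℝ) C₀ h (δ (x, ξ)) (δ (y, η)) _ _ m
    hθ0 hκ1 hκκ' hκ'θ hL0 hh0 hC1 hCA hCB hdlt hkey hE hE' hm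
  have hP0 : (0 : ℝ) ≤ ℏ ^ (m * μ) := (Real.rpow_pos_of_pos hℏ0 _).le
  refine le_trans (mul_le_mul_of_nonneg_left hfin hP0) (le_of_eq (by ring))
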